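/- Let λ be an n-partition. The map π ↦ Y_λ(π), restricted to S_n^λ, is a bijection from S_n^λ onto the set of all key tableaux of shape λ. -/

import Mathlib

/-
Common combinatorial set-up for "Tableaux for Key Polynomials, Demazure
Characters, and Atoms" (Proctor–Willis).

Conventions: a box `(j, i)` means column `j`, row `i`, both 1-indexed.
Partial (remnant) tableaux are encoded by their column-length functions
`c : ℕ → ℕ` (each column of a remnant is a top segment of the original
column), together with the ambient value function `T : ℕ → ℕ → ℕ`.
-/

open scoped BigOperators Classical

noncomputable section

namespace KeyPoly

open MvPolynomial

/-- An `n`-partition `λ = (λ_1, …, λ_n)` with `λ_1 ≥ … ≥ λ_n ≥ 0`,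
recorded as a function on `1, …, n`, vanishing beyond `n`. -/
structure NPartition (n : ℕ) where
  part : ℕ → ℕ
  antitone : ∀ ⦃i j : ℕ⦄, 1 ≤ i → i ≤ j → part j ≤ part i
  outside : ∀ i : ℕ, n < i → part i = 0

variable {n : ℕ}

/-- The column length `ζ_j` of the Young diagram of `λ`. -/
def zeta (lam : NPartition n) (j : ℕ) : ℕ :=
  ((Finset.Icc 1 n).filter fun i => j ≤ lam.part i).card

/-- The box `(j,i)` (column `j`, row `i`) belongs to the diagram of `λ`. -/
def InShape (lam : NPartition n) (j i : ℕ) : Prop :=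
  1 ≤ j ∧ 1 ≤ i ∧ i ≤ n ∧ j ≤ lam.part i

/-- The boxes of the diagram of `λ`, as a finite set of pairs (column, row). -/
def boxes (lam : NPartition n) : Finset (ℕ × ℕ) :=
  (Finset.Icc 1 (lam.part 1) ×ˢ Finset.Icc 1 n).filter fun b => b.1 ≤ lam.part b.2

/-- `T` is a semistandard tableau of shape `λ` with values in `[1,n]`:
rows weakly increase eastward, columns strictly increase southward. -/
def IsSSYT (lam : NPartition n) (T : ℕ → ℕ → ℕ) : Prop :=
  (∀ j i, InShape lam j i → 1 ≤ T j i ∧ T j i ≤ n) ∧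
  (∀ j i, InShape lam (j + 1) i → T j i ≤ T (j + 1) i) ∧
  (∀ j i, InShape lam j (i + 1) → T j i < T j (i + 1))

/-- Normalization: the filling vanishes outside the shape. -/
def ZeroOutside (lam : NPartition n) (T : ℕ → ℕ → ℕ) : Prop :=
  ∀ j i, ¬ InShape lam j i → T j i = 0

/-- `T(l, k+1)`, with the boundary convention `n+1` when `k = ζ_l`. -/
def south (lam : NPartition n) (T : ℕ → ℕ → ℕ) (l k : ℕ) : ℕ :=
  if InShape lam l (k + 1) then T l (k + 1) else n + 1

/-- `T(l+1, k)`, with the boundary convention `n` when `l = λ_k`. -/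
def east (lam : NPartition n) (T : ℕ → ℕ → ℕ) (l k : ℕ) : ℕ :=
  if InShape lam (l + 1) k then T (l + 1) k else n

/-- An `n`-permutation: a tuple `(p 1, …, p n)` of distinct entries from `[1,n]`. -/
def IsNPerm (n : ℕ) (p : ℕ → ℕ) : Prop :=
  Set.BijOn p (Set.Icc 1 n) (Set.Icc 1 n)

/-- The `λ`-key `Y_λ(π)`: column `j` is `π_1, …, π_{ζ_j}` sorted increasingly
(from top to bottom); zero outside the shape. -/
def keyTab (lam : NPartition n) (p : ℕ → ℕ) (j i : ℕ) : ℕ :=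
  if InShape lam j i then
    (((Finset.Icc 1 (zeta lam j)).image p).sort (· ≤ ·)).getD (i - 1) 0
  else 0

/-- A semistandard `T` is a key if the values of each column contain the
values of every column to its east. -/
def colSet (lam : NPartition n) (T : ℕ → ℕ → ℕ) (j : ℕ) : Finset ℕ :=
  (Finset.Icc 1 (zeta lam j)).image (T j)

def IsKey (lam : NPartition n) (T : ℕ → ℕ → ℕ) : Prop :=
  ∀ j j' : ℕ, 1 ≤ j → j ≤ j' → j' ≤ lam.part 1 → colSet lam T j' ⊆ colSet lam T j

/-! ### The (right) scanning method -/

/-- The next column of the scanning path: the earliest column `h' > h`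
(up to `maxCol`) whose column bottom in the remnant `c` is nonempty and has
value weakly larger than the bottom value of column `h`. -/
def nextCol (T : ℕ → ℕ → ℕ) (c : ℕ → ℕ) (maxCol h : ℕ) : Option ℕ :=
  (List.range' (h + 1) (maxCol - h)).find?
    (fun h' => decide (0 < c h' ∧ T h (c h) ≤ T h' (c h')))

/-- Columns of the scanning path (EWIS of column bottoms) starting at column `h`,
with explicit fuel. -/
def pathColsAux (T : ℕ → ℕ → ℕ) (c : ℕ → ℕ) (maxCol : ℕ) : ℕ → ℕ → List ℕ
  | 0, h => [h]
  | fuel + 1, h =>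
    match nextCol T c maxCol h with
    | none => [h]
    | some h' => h :: pathColsAux T c maxCol fuel h'

/-- Columns of the scanning path starting at the bottom of column `j` of the
remnant with column lengths `c`. -/
def pathCols (T : ℕ → ℕ → ℕ) (c : ℕ → ℕ) (maxCol j : ℕ) : List ℕ :=
  pathColsAux T c maxCol maxCol j

/-- Remove the scanning path starting in column `j` from the remnant `c`. -/
def removePath (T : ℕ → ℕ → ℕ) (c : ℕ → ℕ) (maxCol j : ℕ) : ℕ → ℕ :=
  fun h => if h ∈ pathCols T c maxCol j then c h - 1 else c h

/-- Iterate path removal `r` times, always starting from column `j`. -/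
def remnantIter (T : ℕ → ℕ → ℕ) (c0 : ℕ → ℕ) (maxCol j : ℕ) : ℕ → ℕ → ℕ
  | 0 => c0
  | r + 1 => removePath T (remnantIter T c0 maxCol j r) maxCol j

/-- Column lengths of the remnant tableau `T^{(j;i)}`. -/
def remnant (lam : NPartition n) (T : ℕ → ℕ → ℕ) (j i : ℕ) : ℕ → ℕ :=
  remnantIter T (zeta lam) (lam.part 1) j (zeta lam j - i)

/-- The scanning path `P(T; j, i)`, recorded by its list of columns. -/
def scanPath (lam : NPartition n) (T : ℕ → ℕ → ℕ) (j i : ℕ) : List ℕ :=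
  pathCols T (remnant lam T j i) (lam.part 1) j

/-- The scanning value `S(T; j, i)`: the last value of the EWIS from `(j,i)`. -/
def scanValue (lam : NPartition n) (T : ℕ → ℕ → ℕ) (j i : ℕ) : ℕ :=
  T ((scanPath lam T j i).getLastD j)
    (remnant lam T j i ((scanPath lam T j i).getLastD j))

/-- The box `(l,k)` lies on the scanning path `P(T; j, i)`. -/
def InScanPath (lam : NPartition n) (T : ℕ → ℕ → ℕ) (j i l k : ℕ) : Prop :=
  l ∈ scanPath lam T j i ∧ k = remnant lam T j i l

/-- `m(U)` where `U` is the remnant with column lengths `c` restricted to the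
columns `l+1, …, maxCol`:  the maximum of the column-bottom values, with the
convention `m((())) = 1` for the empty tableau. -/
def mEast (T : ℕ → ℕ → ℕ) (c : ℕ → ℕ) (maxCol l : ℕ) : ℕ :=
  max 1 (((Finset.Icc (l + 1) maxCol).filter fun h => 0 < c h).sup fun h => T h (c h))

/-! ### The condition sets A, C, and B -/

/-- The set `A_λ(T, π; l, k)`. -/
def Aset (lam : NPartition n) (T : ℕ → ℕ → ℕ) (p : ℕ → ℕ) (l k : ℕ) : Set ℕ :=
  if keyTab lam p l k < mEast T (remnant lam T l k) (lam.part 1) l then (∅ : Set ℕ)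
  else Set.Icc k (min (keyTab lam p l k) (min (south lam T l k - 1) (east lam T l k)))

/-- The set `C_λ(T, π; l, k)`. -/
def Cset (lam : NPartition n) (T : ℕ → ℕ → ℕ) (p : ℕ → ℕ) (l k : ℕ) : Set ℕ :=
  if l = lam.part 1 then {keyTab lam p l k}
  else if keyTab lam p l k < mEast T (remnant lam T l k) (lam.part 1) l then (∅ : Set ℕ)
  else if mEast T (remnant lam T l k) (lam.part 1) l = keyTab lam p l k then
    Set.Icc k (min (keyTab lam p l k) (min (south lam T l k - 1) (east lam T l k)))
  else {keyTab lam p l k} ∩ Set.Icc k (min (south lam T l k - 1) (east lam T l k))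

/-- The row index `a(l,k;j)`:  the `i` with `(l-1,k) ∈ P(T;j,i)`
(convention `a(l,k;l) = k`). -/
def aIdx (lam : NPartition n) (T : ℕ → ℕ → ℕ) (l k j : ℕ) : ℕ :=
  if j = l then k
  else ((Finset.Icc 1 (zeta lam j)).filter fun i => InScanPath lam T j i (l - 1) k).sup id

/-- The row index `b(l,k;j)`:  the `i` with `(l,k+1) ∈ P(T;j,i)` when `k < ζ_l`,
and `ζ_j + 1` when `k = ζ_l` (convention `b(l,k;l) = k+1`). -/
def bIdx (lam : NPartition n) (T : ℕ → ℕ → ℕ) (l k j : ℕ) : ℕ :=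
  if j = l then k + 1
  else if k = zeta lam l then zeta lam j + 1
  else ((Finset.Icc 1 (zeta lam j)).filter fun i => InScanPath lam T j i l (k + 1)).sup id

/-- `E(l,k;j,i)`:  the value of `T` at the box `(h,m)` of `P(T;j,i)` with `h < l`
maximal (convention `E(l,k;l,k) = k`). -/
def Epath (lam : NPartition n) (T : ℕ → ℕ → ℕ) (l k j i : ℕ) : ℕ :=
  if j = l then k
  else
    T (((scanPath lam T j i).filter fun h => decide (h < l)).foldr max 0)
      (remnant lam T j i (((scanPath lam T j i).filter fun h => decide (h < l)).foldr max 0))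

/-- The set `B_λ(T, π; l, k) = ⋂_{j=1}^{l} ⋃_{i=a(j)}^{b(j)-1} [E(l,k;j,i), Y_λ(π)(j,i)]`. -/
def Bset (lam : NPartition n) (T : ℕ → ℕ → ℕ) (p : ℕ → ℕ) (l k : ℕ) : Set ℕ :=
  {v | ∀ j, 1 ≤ j → j ≤ l →
    ∃ i, aIdx lam T l k j ≤ i ∧ i + 1 ≤ bIdx lam T l k j ∧
      Epath lam T l k j i ≤ v ∧ v ≤ keyTab lam p j i}

/-! ### The left scanning method -/

/-- The largest row `r ≤ c j` of column `j` whose value is at most `x`. -/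
def maxRow (T : ℕ → ℕ → ℕ) (c : ℕ → ℕ) (j x : ℕ) : ℕ :=
  ((Finset.Icc 1 (c j)).filter fun r => T j r ≤ x).sup id

/-- The rows of the maximizing weakly decreasing sequence through columns
`j, j-1, …, 1` with initial bound `x`, in a remnant with column lengths `c`. -/
def leftRows (T : ℕ → ℕ → ℕ) (c : ℕ → ℕ) : ℕ → ℕ → List ℕ
  | 0, _ => []
  | j + 1, x => maxRow T c (j + 1) x :: leftRows T c j (T (j + 1) (maxRow T c (j + 1) x))

/-- The column-1 value at the end of the left scanning path originating at `(j, r)`. -/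
def leftEndVal (T : ℕ → ℕ → ℕ) (c : ℕ → ℕ) (j r : ℕ) : ℕ :=
  T 1 ((leftRows T c j (T j r)).getLastD 0)

/-- Remove the left scanning path originating at `(l, c l)`, together with
all values beneath it, from the remnant `c`. -/
def leftRemovePath (T : ℕ → ℕ → ℕ) (c : ℕ → ℕ) (l : ℕ) : ℕ → ℕ :=
  fun j =>
    if 1 ≤ j ∧ j ≤ l then (leftRows T c l (T l (c l))).getD (l - j) 0 - 1 else c j

/-- Iterate left-path removal `r` times (always for column `l`). -/
def leftRemnantIter (T : ℕ → ℕ → ℕ) (c0 : ℕ → ℕ) (l : ℕ) : ℕ → ℕ → ℕ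
  | 0 => c0
  | r + 1 => leftRemovePath T (leftRemnantIter T c0 l r) l

/-- Column lengths of the left remnant used to compute `M(T; l, i)`:
`T` restricted to its first `l` columns with the left scanning paths
originating at `(l, ζ_l), …, (l, i+1)` (and everything beneath them) removed. -/
def leftRemnant (lam : NPartition n) (T : ℕ → ℕ → ℕ) (l i : ℕ) : ℕ → ℕ :=
  leftRemnantIter T (zeta lam) l (zeta lam l - i)

/-- The left scanning value `M(T; l, i)`. -/
def leftScanValue (lam : NPartition n) (T : ℕ → ℕ → ℕ) (l i : ℕ) : ℕ :=
  leftEndVal T (leftRemnant lam T l i) l i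

/-! ### The condition sets F and G -/

/-- The set `F_λ(T, σ; l, k)`. -/
def Fset (lam : NPartition n) (T : ℕ → ℕ → ℕ) (sg : ℕ → ℕ) (l k : ℕ) : Set ℕ :=
  if l = 1 then Set.Icc (keyTab lam sg 1 k) (south lam T 1 k - 1)
  else
    let U := leftRemnant lam T l k
    let q := maxRow T U (l - 1) (south lam T l k - 1)
    let P := (Finset.Icc 1 q).filter fun h => keyTab lam sg l k ≤ leftEndVal T U (l - 1) h
    if hP : P.Nonempty then Set.Icc (T (l - 1) (P.min' hP)) (south lam T l k - 1)
    else (∅ : Set ℕ)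

/-- The set `G_λ(T, σ; l, k)`. -/
def Gset (lam : NPartition n) (T : ℕ → ℕ → ℕ) (sg : ℕ → ℕ) (l k : ℕ) : Set ℕ :=
  if l = 1 then {keyTab lam sg 1 k}
  else
    let U := leftRemnant lam T l k
    let q := maxRow T U (l - 1) (south lam T l k - 1)
    let P := (Finset.Icc 1 q).filter fun h => leftEndVal T U (l - 1) h = keyTab lam sg l k
    if hP : P.Nonempty then
      Set.Icc (T (l - 1) (P.min' hP))
        (min ((if P.max' hP + 1 ≤ U (l - 1) then T (l - 1) (P.max' hP + 1) else n + 1) - 1)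
          (south lam T l k - 1))
    else (∅ : Set ℕ)

/-! ### Polynomials, divided differences, words -/

/-- Polynomials in the variables `X 1, …, X n` (indexed by `ℕ`) over `ℚ`. -/
abbrev Poly : Type := MvPolynomial ℕ ℚ

/-- The action of `s_i` on polynomials: interchange `x_i` and `x_{i+1}`. -/
def sOp (i : ℕ) (P : Poly) : Poly := rename (Equiv.swap i (i + 1)) P

/-- The divided difference operator
`ρ_i = (x_i - x_{i+1})⁻¹ ∘ (1 - s_i) ∘ x_i`, defined as the unique polynomial
`Q` with `(x_i - x_{i+1}) Q = x_i P - s_i (x_i P)`. -/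
def rhoOp (i : ℕ) (P : Poly) : Poly :=
  if h : ∃ Q : Poly, (X i - X (i + 1)) * Q = X i * P - sOp i (X i * P) then h.choose
  else 0

/-- The operator `ρ̄_i := ρ_i - 1`. -/
def rhoBarOp (i : ℕ) (P : Poly) : Poly := rhoOp i P - P

/-- Apply operators indexed by a word `[i_t, …, i_1]`, rightmost first:
`applyOps f [i_t, …, i_1] P = f i_t (⋯ (f i_1 P))`. -/
def applyOps (f : ℕ → Poly → Poly) : List ℕ → Poly → Poly
  | [], P => P
  | i :: w, P => f i (applyOps f w P)

/-- The monomial `x_1^{λ_1} ⋯ x_n^{λ_n}`. -/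
def lamMonomial (lam : NPartition n) : Poly :=
  ∏ i ∈ Finset.Icc 1 n, X i ^ lam.part i

/-- The weight monomial `x^T = ∏ x_i^{c_i}` of the filling `T`. -/
def weight (lam : NPartition n) (T : ℕ → ℕ → ℕ) : Poly :=
  ∏ b ∈ boxes lam, X (T b.1 b.2)

/-- The simple reflection `s_i` acting by value. -/
def swapVal (i v : ℕ) : ℕ := if v = i then i + 1 else if v = i + 1 then i else v

/-- The permutation `s_{i_t} ⋯ s_{i_1}.(1, 2, …, n)` obtained by applying the
word `w = [i_t, …, i_1]` (rightmost letter first, each acting by value) to the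
identity. -/
def permOfWord (w : List ℕ) : ℕ → ℕ := w.foldr (fun i f => swapVal i ∘ f) id

/-- `w` is a word in letters `s_1, …, s_{n-1}` producing `π` from `(1, …, n)`. -/
def WordFor (n : ℕ) (w : List ℕ) (p : ℕ → ℕ) : Prop :=
  (∀ i ∈ w, 1 ≤ i ∧ i + 1 ≤ n) ∧ ∀ t, 1 ≤ t → t ≤ n → permOfWord w t = p t

/-- `w` is a reduced word for `π`: it produces `π` with minimal length. -/
def IsReducedWord (n : ℕ) (w : List ℕ) (p : ℕ → ℕ) : Prop :=
  WordFor n w p ∧ ∀ w' : List ℕ, WordFor n w' p → w.length ≤ w'.length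

/-- The atom `c_λ(π;x) = ρ̄_{i_t} ⋯ ρ̄_{i_1} . x_1^{λ_1} ⋯ x_n^{λ_n}`, computed
from a choice of reduced word for `π` (it is independent of this choice). -/
def atomPoly (lam : NPartition n) (p : ℕ → ℕ) : Poly :=
  if h : ∃ w : List ℕ, IsReducedWord n w p then
    applyOps rhoBarOp h.choose (lamMonomial lam)
  else 0

/-! ### `S_n^λ` -/

/-- The set `Q_λ` of distinct column lengths of `λ`. -/
def Qset (lam : NPartition n) : Finset ℕ := (Finset.Icc 1 (lam.part 1)).image (zeta lam)

/-- `π ∈ S_n^λ`: an `n`-permutation increasing on each block `[q_{r-1}+1, q_r]`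
cut out by the column lengths of `λ` (equivalently, `π_i < π_j` whenever
`i < j` and no element of `Q_λ` lies in `[i, j)`). -/
def InSnLam (lam : NPartition n) (p : ℕ → ℕ) : Prop :=
  IsNPerm n p ∧ ∀ i j, 1 ≤ i → i < j → j ≤ n →
    (∀ q ∈ Qset lam, q < i ∨ j ≤ q) → p i < p j

end KeyPoly

/-!
Column `j` of `Y_λ(π)` is the set `{π_1, …, π_{ζ_j}}` in increasing order. The blocks of
`S_n^λ` are exactly the sets of rows of equal length, and the rows of length `j` are
`ζ_{j+1} + 1, …, ζ_j`; so for `π ∈ S_n^λ` these rows carry, in increasing order, the values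
lying in column `j` but not in column `j + 1` (column `0` being `[n]`). This recipe thus inverts
`π ↦ Y_λ(π)`. Applied to an arbitrary key `K`, whose columns are nested, it produces a
permutation in `S_n^λ`: the sets it assigns to the blocks telescope, so `{π_1, …, π_{ζ_j}}` is
the set of values of column `j` of `K`, and hence `Y_λ(π) = K`.
-/

namespace KeyPoly

section Nth

def nth (s : Finset ℕ) (m : ℕ) : ℕ := (s.sort (· ≤ ·)).getD m 0

variable {s t : Finset ℕ} {m m' : ℕ}

lemma nth_eq_orderEmbOfFin {k : ℕ} (h : s.card = k) (hm : m < k) :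
    nth s m = s.orderEmbOfFin h ⟨m, hm⟩ := by
  subst h
  rw [nth, Finset.orderEmbOfFin_apply, List.getD_eq_getElem _ _ (by simpa using hm)]
  rfl

lemma nth_mem (h : m < s.card) : nth s m ∈ s := by
  rw [nth_eq_orderEmbOfFin rfl h]
  exact s.orderEmbOfFin_mem rfl _

lemma nth_lt_nth (hm : m < m') (h : m' < s.card) : nth s m < nth s m' := by
  rw [nth_eq_orderEmbOfFin rfl (hm.trans h), nth_eq_orderEmbOfFin rfl h]
  exact (s.orderEmbOfFin rfl).strictMono hm

lemma nth_strictMonoOn : StrictMonoOn (nth s) (Set.Iio s.card) :=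
  fun _ _ _ hm' hmm' => nth_lt_nth hmm' hm'

lemma exists_nth_eq {x : ℕ} (hx : x ∈ s) : ∃ m < s.card, nth s m = x := by
  rw [← Finset.mem_coe, ← s.range_orderEmbOfFin rfl] at hx
  obtain ⟨⟨m, hm⟩, rfl⟩ := hx
  exact ⟨m, hm, nth_eq_orderEmbOfFin rfl hm⟩

lemma nth_le_nth_of_subset (hst : s ⊆ t) (h : m < s.card) : nth t m ≤ nth s m := by
  by_contra! hlt
  -- the `m + 1` smallest elements of `s` would lie among the `m` elements of `t` below `nth t m`
  have hsub : (Finset.range (m + 1)).image (nth s) ⊆ (Finset.range m).image (nth t) := by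
    simp only [Finset.subset_iff, Finset.mem_image, Finset.mem_range]
    rintro _ ⟨k, hk, rfl⟩
    have hks : nth s k ≤ nth s m := by
      rcases (Nat.lt_succ_iff.1 hk).lt_or_eq with hk | rfl
      exacts [(nth_lt_nth hk h).le, le_rfl]
    obtain ⟨k', hk', he⟩ := exists_nth_eq (hst (nth_mem (hk.trans_le h)))
    refine ⟨k', ?_, he⟩
    by_contra! hmk
    rcases hmk.lt_or_eq with hmk | rfl
    · exact absurd (nth_lt_nth hmk hk') (by omega)
    · omega
  have hinj : Set.InjOn (nth s) (Finset.range (m + 1) : Set ℕ) :=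
    (nth_strictMonoOn.mono fun k hk => by simp at hk ⊢; omega).injOn
  have := Finset.card_le_card hsub
  rw [Finset.card_image_of_injOn hinj, Finset.card_range] at this
  exact absurd (this.trans Finset.card_image_le) (by simp)

lemma nth_image_Icc {f : ℕ → ℕ} {a b i : ℕ} (hf : StrictMonoOn f (Finset.Icc a b))
    (hi : i ∈ Finset.Icc a b) : nth ((Finset.Icc a b).image f) (i - a) = f i := by
  rw [Finset.coe_Icc] at hf
  rw [Finset.mem_Icc] at hi
  have hcard : ((Finset.Icc a b).image f).card = b + 1 - a := by
    rw [Finset.card_image_of_injOn (by simpa using hf.injOn), Nat.card_Icc]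
  have hg : (fun k : Fin (b + 1 - a) => f (a + k)) = _ :=
    Finset.orderEmbOfFin_unique hcard
      (fun k => Finset.mem_image_of_mem f (Finset.mem_Icc.2 ⟨by omega, by omega⟩))
      (fun k l hkl => hf ⟨by omega, by omega⟩ ⟨by omega, by omega⟩ (by simpa using hkl))
  rw [nth_eq_orderEmbOfFin hcard (by omega), ← congrFun hg ⟨i - a, by omega⟩]
  exact congrArg f (by simp only; omega)

lemma image_nth_Icc {a b : ℕ} (hs : s.card = b + 1 - a) :
    (Finset.Icc a b).image (fun i => nth s (i - a)) = s := by
  refine Finset.eq_of_subset_of_card_le ?_ ?_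
  · simp only [Finset.subset_iff, Finset.mem_image, Finset.mem_Icc]
    rintro _ ⟨i, hi, rfl⟩
    exact nth_mem (by omega)
  · rw [hs, Finset.card_image_of_injOn, Nat.card_Icc]
    refine StrictMonoOn.injOn fun i hi j hj hij => nth_lt_nth ?_ ?_ <;>
      simp only [Finset.coe_Icc, Set.mem_Icc] at hi hj <;> omega

end Nth

section Shape

variable {n : ℕ} (lam : NPartition n)

lemma zeta_le (j : ℕ) : zeta lam j ≤ n :=
  (Finset.card_filter_le _ _).trans (by simp)

lemma zeta_zero : zeta lam 0 = n := by
  simp [zeta]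

lemma zeta_antitone : Antitone (zeta lam) :=
  fun _ _ hjj' => Finset.card_le_card (Finset.monotone_filter_right _ fun _ _ h => hjj'.trans h)

lemma le_zeta_iff {i j : ℕ} (hi : 1 ≤ i) :
    i ≤ zeta lam j ↔ i ≤ n ∧ j ≤ lam.part i := by
  constructor
  · intro h
    by_contra! hc
    -- every row of length `≥ j` lies above row `i`
    have hsub : (Finset.Icc 1 n).filter (fun x => j ≤ lam.part x) ⊆ Finset.Icc 1 (i - 1) := by
      intro x hx
      rw [Finset.mem_filter, Finset.mem_Icc] at hx
      rw [Finset.mem_Icc]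
      refine ⟨hx.1.1, ?_⟩
      by_contra! hxi
      have := hc (by omega)
      have := lam.antitone hi (show i ≤ x by omega)
      omega
    have := Finset.card_le_card hsub
    rw [Nat.card_Icc] at this
    exact absurd h (by unfold zeta; omega)
  · rintro ⟨hin, hji⟩
    have hsub : Finset.Icc 1 i ⊆ (Finset.Icc 1 n).filter (fun x => j ≤ lam.part x) := by
      intro x hx
      rw [Finset.mem_Icc] at hx
      exact Finset.mem_filter.2 ⟨Finset.mem_Icc.2 ⟨hx.1, hx.2.trans hin⟩,
        hji.trans (lam.antitone hx.1 hx.2)⟩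
    simpa [zeta] using Finset.card_le_card hsub

lemma inShape_iff {i j : ℕ} (hj : 1 ≤ j) (hi : 1 ≤ i) :
    InShape lam j i ↔ i ≤ zeta lam j := by
  rw [le_zeta_iff lam hi, InShape]
  tauto

lemma zeta_eq_zero {j : ℕ} (hj : lam.part 1 < j) : zeta lam j = 0 := by
  by_contra h
  have := (le_zeta_iff lam le_rfl (j := j)).1 (by omega)
  omega

def rowBlock (j : ℕ) : Finset ℕ := Finset.Icc (zeta lam (j + 1) + 1) (zeta lam j)

lemma mem_rowBlock {i j : ℕ} :
    i ∈ rowBlock lam j ↔ 1 ≤ i ∧ i ≤ n ∧ lam.part i = j := by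
  rw [rowBlock, Finset.mem_Icc]
  by_cases hi : 1 ≤ i
  · rw [Nat.add_one_le_iff, ← not_le, le_zeta_iff lam hi, le_zeta_iff lam hi]
    omega
  · omega

lemma forall_mem_Qset_lt_or_le_iff {i j : ℕ} (hi : 1 ≤ i) (hij : i ≤ j) (hj : j ≤ n) :
    (∀ q ∈ Qset lam, q < i ∨ j ≤ q) ↔ lam.part i = lam.part j := by
  have hji := lam.antitone hi hij
  constructor
  · intro h
    by_contra hne
    -- otherwise the column `λ_i` has length in `[i, j)`
    have hmem : zeta lam (lam.part i) ∈ Qset lam :=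
      Finset.mem_image_of_mem _ (Finset.mem_Icc.2 ⟨by omega, lam.antitone le_rfl hi⟩)
    rcases h _ hmem with h | h
    · exact absurd ((le_zeta_iff lam hi).2 ⟨by omega, le_rfl⟩) (by omega)
    · have := (le_zeta_iff lam (by omega)).1 h
      omega
  · rintro heq q hq
    obtain ⟨c, -, rfl⟩ := Finset.mem_image.1 hq
    by_contra! h
    have h1 := (le_zeta_iff lam hi).1 h.1
    have h2 : ¬ (j ≤ n ∧ c ≤ lam.part j) := (le_zeta_iff lam (by omega)).not.1 (by omega)
    omega

end Shape

section KeyOfPerm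

variable {n : ℕ} {lam : NPartition n} {p : ℕ → ℕ}

def prefixImage (p : ℕ → ℕ) (q : ℕ) : Finset ℕ := (Finset.Icc 1 q).image p

lemma prefixImage_mono : Monotone (prefixImage p) :=
  fun _ _ h => Finset.image_subset_image (Finset.Icc_subset_Icc_right h)

lemma IsNPerm.injOn_Icc (hp : IsNPerm n p) {q : ℕ} (hq : q ≤ n) :
    Set.InjOn p (Finset.Icc 1 q : Set ℕ) :=
  hp.injOn.mono (by simpa using Set.Icc_subset_Icc_right hq)

lemma card_prefixImage (hp : IsNPerm n p) {q : ℕ} (hq : q ≤ n) :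
    (prefixImage p q).card = q := by
  rw [prefixImage, Finset.card_image_of_injOn (hp.injOn_Icc hq), Nat.card_Icc, Nat.add_sub_cancel]

lemma prefixImage_subset_Icc (hp : IsNPerm n p) {q : ℕ} (hq : q ≤ n) :
    prefixImage p q ⊆ Finset.Icc 1 n := by
  simp only [prefixImage, Finset.subset_iff, Finset.mem_image, Finset.mem_Icc]
  rintro _ ⟨a, ha, rfl⟩
  exact hp.mapsTo ⟨ha.1, ha.2.trans hq⟩

lemma prefixImage_self (hp : IsNPerm n p) : prefixImage p n = Finset.Icc 1 n :=
  Finset.eq_of_subset_of_card_le (prefixImage_subset_Icc hp le_rfl)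
    (by rw [card_prefixImage hp le_rfl, Nat.card_Icc, Nat.add_sub_cancel])

lemma prefixImage_sdiff (hp : IsNPerm n p) {a b : ℕ} (hab : a ≤ b) (hb : b ≤ n) :
    prefixImage p b \ prefixImage p a = (Finset.Icc (a + 1) b).image p := by
  rw [prefixImage, prefixImage, ← Finset.image_sdiff_of_injOn (hp.injOn_Icc hb)
    (Finset.Icc_subset_Icc_right hab)]
  congr 1
  ext x
  simp only [Finset.mem_sdiff, Finset.mem_Icc]
  omega

lemma keyTab_of_inShape {j i : ℕ} (h : InShape lam j i) :
    keyTab lam p j i = nth (prefixImage p (zeta lam j)) (i - 1) := by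
  rw [keyTab, if_pos h]
  rfl

lemma keyTab_of_not_inShape {j i : ℕ} (h : ¬ InShape lam j i) : keyTab lam p j i = 0 := by
  rw [keyTab, if_neg h]

lemma InShape.sub_one_lt_zeta {i j : ℕ} (h : InShape lam j i) : i - 1 < zeta lam j := by
  have := (inShape_iff lam h.1 h.2.1).1 h
  have := h.2.1
  omega

lemma keyTab_mem_prefixImage (hp : IsNPerm n p) {j i : ℕ} (h : InShape lam j i) :
    keyTab lam p j i ∈ prefixImage p (zeta lam j) := by
  rw [keyTab_of_inShape h]
  exact nth_mem (by rw [card_prefixImage hp (zeta_le lam j)]; exact h.sub_one_lt_zeta)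

lemma keyTab_isSSYT (hp : IsNPerm n p) : IsSSYT lam (keyTab lam p) := by
  have bounds : ∀ j i, InShape lam j i → 1 ≤ keyTab lam p j i ∧ keyTab lam p j i ≤ n :=
    fun j i h => by
      simpa using prefixImage_subset_Icc hp (zeta_le lam j) (keyTab_mem_prefixImage hp h)
  refine ⟨bounds, fun j i h => ?_, fun j i h => ?_⟩
  · obtain rfl | hj := Nat.eq_zero_or_pos j
    · rw [keyTab_of_not_inShape fun h => by simpa using h.1]
      exact Nat.zero_le _
    rw [keyTab_of_inShape h, keyTab_of_inShape ⟨hj, h.2.1, h.2.2.1, j.le_succ.trans h.2.2.2⟩]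
    refine nth_le_nth_of_subset (prefixImage_mono (zeta_antitone lam j.le_succ)) ?_
    rw [card_prefixImage hp (zeta_le lam _)]
    exact h.sub_one_lt_zeta
  · obtain rfl | hi := Nat.eq_zero_or_pos i
    · rw [keyTab_of_not_inShape fun h => by simpa using h.2.1]
      exact (bounds j 1 h).1
    rw [keyTab_of_inShape h, keyTab_of_inShape ⟨h.1, hi, i.le_succ.trans h.2.2.1,
      (lam.antitone hi i.le_succ).trans' h.2.2.2⟩]
    have := h.sub_one_lt_zeta
    exact nth_lt_nth (by omega) (by rw [card_prefixImage hp (zeta_le lam _)]; omega)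

lemma colSet_keyTab (hp : IsNPerm n p) {j : ℕ} (hj : 1 ≤ j) :
    colSet lam (keyTab lam p) j = prefixImage p (zeta lam j) := by
  rw [colSet, ← image_nth_Icc (s := prefixImage p (zeta lam j)) (a := 1)
    (by rw [card_prefixImage hp (zeta_le lam j), Nat.add_sub_cancel])]
  refine Finset.image_congr fun i hi => ?_
  rw [Finset.mem_coe, Finset.mem_Icc] at hi
  exact keyTab_of_inShape ((inShape_iff lam hj hi.1).2 hi.2)

lemma keyTab_isKey (hp : IsNPerm n p) : IsKey lam (keyTab lam p) := by
  intro j j' hj hjj' _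
  rw [colSet_keyTab hp hj, colSet_keyTab hp (hj.trans hjj')]
  exact prefixImage_mono (zeta_antitone lam hjj')

lemma keyTab_zeroOutside (p : ℕ → ℕ) : ZeroOutside lam (keyTab lam p) :=
  fun _ _ => keyTab_of_not_inShape

end KeyOfPerm

section PermOfKey

variable {n : ℕ} {lam : NPartition n} {K : ℕ → ℕ → ℕ}

lemma IsSSYT.strictMonoOn_col (hT : IsSSYT lam K) {j : ℕ} (hj : 1 ≤ j) :
    StrictMonoOn (K j) (Finset.Icc 1 (zeta lam j)) := by
  rw [Finset.coe_Icc]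
  exact strictMonoOn_of_lt_add_one Set.ordConnected_Icc fun i _ hi hi' =>
    hT.2.2 j i ((inShape_iff lam hj (by omega)).2 hi'.2)

lemma card_colSet (hT : IsSSYT lam K) {j : ℕ} (hj : 1 ≤ j) :
    (colSet lam K j).card = zeta lam j := by
  rw [colSet, Finset.card_image_of_injOn (hT.strictMonoOn_col hj).injOn, Nat.card_Icc,
    Nat.add_sub_cancel]

lemma nth_colSet (hT : IsSSYT lam K) {j i : ℕ} (h : InShape lam j i) :
    nth (colSet lam K j) (i - 1) = K j i :=
  nth_image_Icc (hT.strictMonoOn_col h.1)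
    (Finset.mem_Icc.2 ⟨h.2.1, (inShape_iff lam h.1 h.2.1).1 h⟩)

lemma colSet_subset_Icc (hT : IsSSYT lam K) {j : ℕ} (hj : 1 ≤ j) :
    colSet lam K j ⊆ Finset.Icc 1 n := by
  simp only [colSet, Finset.subset_iff, Finset.mem_image, Finset.mem_Icc]
  rintro _ ⟨i, hi, rfl⟩
  exact hT.1 j i ((inShape_iff lam hj hi.1).2 hi.2)

/-- Column `0` is a virtual column holding all of `[n]`, matching `zeta lam 0 = n`. -/
def colVals (lam : NPartition n) (K : ℕ → ℕ → ℕ) (j : ℕ) : Finset ℕ :=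
  if j = 0 then Finset.Icc 1 n else colSet lam K j

lemma card_colVals (hT : IsSSYT lam K) (j : ℕ) : (colVals lam K j).card = zeta lam j := by
  rw [colVals]
  split_ifs with hj
  · rw [hj, zeta_zero, Nat.card_Icc, Nat.add_sub_cancel]
  · exact card_colSet hT (Nat.one_le_iff_ne_zero.2 hj)

lemma colVals_succ_subset (hT : IsSSYT lam K) (hK : IsKey lam K) (j : ℕ) :
    colVals lam K (j + 1) ⊆ colVals lam K j := by
  rw [colVals, colVals, if_neg j.succ_ne_zero]
  split_ifs with hj
  · exact colSet_subset_Icc hT le_add_self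
  by_cases hjl : j + 1 ≤ lam.part 1
  · exact hK j (j + 1) (Nat.one_le_iff_ne_zero.2 hj) j.le_succ hjl
  · have hempty : colSet lam K (j + 1) = ∅ := Finset.card_eq_zero.1 <| by
      rw [card_colSet hT le_add_self, zeta_eq_zero lam (by omega)]
    rw [hempty]
    exact Finset.empty_subset _

def invKey (lam : NPartition n) (K : ℕ → ℕ → ℕ) (i : ℕ) : ℕ :=
  if 1 ≤ i ∧ i ≤ n then
    nth (colVals lam K (lam.part i) \ colVals lam K (lam.part i + 1))
      (i - (zeta lam (lam.part i + 1) + 1))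
  else i

lemma invKey_of_mem_rowBlock {i j : ℕ} (hi : i ∈ rowBlock lam j) :
    invKey lam K i =
      nth (colVals lam K j \ colVals lam K (j + 1)) (i - (zeta lam (j + 1) + 1)) := by
  obtain ⟨hi1, hin, rfl⟩ := (mem_rowBlock lam).1 hi
  rw [invKey, if_pos ⟨hi1, hin⟩]

lemma card_colVals_sdiff (hT : IsSSYT lam K) (hK : IsKey lam K) (j : ℕ) :
    (colVals lam K j \ colVals lam K (j + 1)).card = zeta lam j + 1 - (zeta lam (j + 1) + 1) := by
  rw [Finset.card_sdiff_of_subset (colVals_succ_subset hT hK j), card_colVals hT,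
    card_colVals hT]
  omega

lemma image_rowBlock_invKey (hT : IsSSYT lam K) (hK : IsKey lam K) (j : ℕ) :
    (rowBlock lam j).image (invKey lam K) = colVals lam K j \ colVals lam K (j + 1) := by
  rw [← image_nth_Icc (card_colVals_sdiff hT hK j)]
  exact Finset.image_congr fun i hi => invKey_of_mem_rowBlock hi

lemma prefixImage_invKey (hT : IsSSYT lam K) (hK : IsKey lam K) (j : ℕ) :
    prefixImage (invKey lam K) (zeta lam j) = colVals lam K j := by
  induction h : lam.part 1 + 1 - j generalizing j with
  | zero =>
    have hz : zeta lam j = 0 := zeta_eq_zero lam (by omega)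
    have hempty : colVals lam K j = ∅ := Finset.card_eq_zero.1 (hz ▸ card_colVals hT j)
    simp [hz, hempty, prefixImage]
  | succ d ih =>
    have hsplit :
        Finset.Icc 1 (zeta lam j) = Finset.Icc 1 (zeta lam (j + 1)) ∪ rowBlock lam j := by
      have := zeta_antitone lam (by omega : j ≤ j + 1)
      ext i
      simp only [rowBlock, Finset.mem_union, Finset.mem_Icc]
      omega
    rw [prefixImage, hsplit, Finset.image_union, ← prefixImage, ih (j + 1) (by omega),
      image_rowBlock_invKey hT hK, Finset.union_sdiff_of_subset (colVals_succ_subset hT hK j)]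

lemma invKey_isNPerm (hT : IsSSYT lam K) (hK : IsKey lam K) : IsNPerm n (invKey lam K) := by
  have himg : (Finset.Icc 1 n).image (invKey lam K) = Finset.Icc 1 n := by
    simpa [prefixImage, zeta_zero, colVals] using prefixImage_invKey hT hK 0
  have hinj : Set.InjOn (invKey lam K) (Set.Icc 1 n) := by
    rw [← Finset.coe_Icc]
    exact Finset.injOn_of_card_image_eq (by rw [himg])
  have hcoe : invKey lam K '' Set.Icc 1 n = Set.Icc 1 n := by
    simpa using congrArg ((↑) : Finset ℕ → Set ℕ) himg
  have := hinj.bijOn_image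
  rwa [hcoe] at this

lemma invKey_lt_invKey (hT : IsSSYT lam K) (hK : IsKey lam K) {i i' : ℕ} (hi : 1 ≤ i)
    (hii' : i < i') (hi' : i' ≤ n) (hpart : lam.part i = lam.part i') :
    invKey lam K i < invKey lam K i' := by
  have hb := (mem_rowBlock lam).2 ⟨hi, hii'.le.trans hi', rfl⟩
  have hb' := (mem_rowBlock lam).2 ⟨hi.trans hii'.le, hi', hpart.symm⟩
  rw [invKey_of_mem_rowBlock hb, invKey_of_mem_rowBlock hb']
  rw [rowBlock, Finset.mem_Icc] at hb hb'
  exact nth_lt_nth (by omega) (by rw [card_colVals_sdiff hT hK]; omega)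

lemma invKey_inSnLam (hT : IsSSYT lam K) (hK : IsKey lam K) : InSnLam lam (invKey lam K) :=
  ⟨invKey_isNPerm hT hK, fun _ _ hi hii' hi' hQ => invKey_lt_invKey hT hK hi hii' hi'
    ((forall_mem_Qset_lt_or_le_iff lam hi hii'.le hi').1 hQ)⟩

lemma keyTab_invKey (hT : IsSSYT lam K) (hK : IsKey lam K) (hZ : ZeroOutside lam K) :
    keyTab lam (invKey lam K) = K := by
  funext j i
  by_cases h : InShape lam j i
  · rw [keyTab_of_inShape h, prefixImage_invKey hT hK, colVals, if_neg (by have := h.1; omega),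
      nth_colSet hT h]
  · rw [keyTab_of_not_inShape h, hZ j i h]

end PermOfKey

section LeftInverse

variable {n : ℕ} {lam : NPartition n} {p : ℕ → ℕ}

lemma colVals_keyTab (hp : IsNPerm n p) (j : ℕ) :
    colVals lam (keyTab lam p) j = prefixImage p (zeta lam j) := by
  rw [colVals]
  split_ifs with hj
  · rw [hj, zeta_zero, prefixImage_self hp]
  · exact colSet_keyTab hp (Nat.one_le_iff_ne_zero.2 hj)

lemma InSnLam.strictMonoOn_rowBlock (hp : InSnLam lam p) (j : ℕ) :
    StrictMonoOn p (rowBlock lam j) := by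
  intro a ha b hb hab
  obtain ⟨ha1, -, rfl⟩ := (mem_rowBlock lam).1 ha
  obtain ⟨-, hbn, hpart⟩ := (mem_rowBlock lam).1 hb
  exact hp.2 a b ha1 hab hbn ((forall_mem_Qset_lt_or_le_iff lam ha1 hab.le hbn).2 hpart.symm)

lemma invKey_keyTab (hp : InSnLam lam p) (hfix : ∀ t, t = 0 ∨ n < t → p t = t) :
    invKey lam (keyTab lam p) = p := by
  funext i
  by_cases hi : 1 ≤ i ∧ i ≤ n
  · have hb : i ∈ rowBlock lam (lam.part i) := (mem_rowBlock lam).2 ⟨hi.1, hi.2, rfl⟩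
    rw [invKey_of_mem_rowBlock hb, colVals_keyTab hp.1, colVals_keyTab hp.1,
      prefixImage_sdiff hp.1 (zeta_antitone lam (Nat.le_add_right _ 1)) (zeta_le lam _)]
    exact nth_image_Icc (hp.strictMonoOn_rowBlock _) hb
  · rw [invKey, if_neg hi]
    exact (hfix i (by omega)).symm

end LeftInverse

theorem keyTab_bijOn_SnLam_general (n : ℕ) (lam : NPartition n) :
    Set.BijOn (fun p => keyTab lam p)
      {p : ℕ → ℕ | InSnLam lam p ∧ ∀ t, t = 0 ∨ n < t → p t = t}
      {K : ℕ → ℕ → ℕ | IsSSYT lam K ∧ IsKey lam K ∧ ZeroOutside lam K} := by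
  refine Set.InvOn.bijOn (f' := invKey lam) ⟨fun p hp => invKey_keyTab hp.1 hp.2,
    fun K hK => keyTab_invKey hK.1 hK.2.1 hK.2.2⟩ ?_ ?_
  · intro p hp
    exact ⟨keyTab_isSSYT hp.1.1, keyTab_isKey hp.1.1, keyTab_zeroOutside p⟩
  · intro K hK
    refine ⟨invKey_inSnLam hK.1 hK.2.1, fun t ht => ?_⟩
    rw [invKey, if_neg (by omega)]

/-- `π ↦ Y_λ(π)` restricts to a bijection from `S_n^λ`
onto the set of all (semistandard) key tableaux of shape `λ`. -/
theorem keyTab_bijOn_SnLam (n : ℕ) (hn : 1 ≤ n) (lam : NPartition n) :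
    Set.BijOn (fun p => keyTab lam p)
      {p : ℕ → ℕ | InSnLam lam p ∧ ∀ t, t = 0 ∨ n < t → p t = t}
      {K : ℕ → ℕ → ℕ | IsSSYT lam K ∧ IsKey lam K ∧ ZeroOutside lam K} :=
  keyTab_bijOn_SnLam_general n lam

end KeyPoly
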